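/- arXiv:2011.13589 — 3 statements merged into one kernel-verified Lean document; each statement's English description precedes it below -/
import Mathlib

section
/- Let C be a right Markov code for (X_A, σ_A) and suppose X_A contains a fixed point a^∞ = (a,a,a,...). Then the constant word a^m (m copies of a) belongs to C if and only if m = 1. -/
namespace TMS

/-- A `{0,1}` transition matrix on `N` symbols, as a `Bool`-valued function. -/
abbrev Mat (N : ℕ) := Fin N → Fin N → Bool

/-- A finite word is (locally) admissible: all consecutive transitions are allowed. -/
def Adm {N : ℕ} (A : Mat N) (w : List (Fin N)) : Prop :=
  List.Chain' (fun a b => A a b = true) w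

instance {N : ℕ} (A : Mat N) (w : List (Fin N)) : Decidable (Adm A w) :=
  inferInstanceAs (Decidable (List.IsChain (fun a b => A a b = true) w))

/-- The one-sided shift space `X_A`. -/
def SSpace {N : ℕ} (A : Mat N) : Set (ℕ → Fin N) :=
  {x | ∀ n, A (x n) (x (n + 1)) = true}

/-- The shift on sequences. -/
def shift {N : ℕ} (x : ℕ → Fin N) : ℕ → Fin N := fun n => x (n + 1)

/-- The shift as a self-map of the shift space. -/
def shiftS {N : ℕ} (A : Mat N) (x : ↥(SSpace A)) : ↥(SSpace A) :=
  ⟨shift x.1, fun n => x.2 (n + 1)⟩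

/-- `x` begins with the finite word `w`. -/
def Begins {N : ℕ} (x : ℕ → Fin N) (w : List (Fin N)) : Prop :=
  ∀ i (h : i < w.length), x i = w.get ⟨i, h⟩

/-- A word belongs to `B_*(X_A)`: it occurs at the beginning of some point of `X_A`. -/
def AdmX {N : ℕ} (A : Mat N) (w : List (Fin N)) : Prop :=
  ∃ x ∈ SSpace A, Begins x w

/-- The cylinder set `U_w ⊂ X_A`. -/
def Cyl {N : ℕ} (A : Mat N) (w : List (Fin N)) : Set (ℕ → Fin N) :=
  {x ∈ SSpace A | Begins x w}

/-- A finite family of words is a prefix code: the words are pairwise distinct and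
no word is an initial segment of another. -/
def IsPrefixCode {N M : ℕ} (ω : Fin M → List (Fin N)) : Prop :=
  Function.Injective ω ∧ ∀ i j : Fin M, i ≠ j → ¬ (ω i <+: ω j)

/-- Starting position of the `n`-th block in the factorization of a point along
the index sequence `f`. -/
def pos {N M : ℕ} (ω : Fin M → List (Fin N)) (f : ℕ → Fin M) : ℕ → ℕ
  | 0 => 0
  | n + 1 => pos ω f n + (ω (f n)).length

/-- The point `x` factors as the infinite concatenation `ω (f 0) ω (f 1) ⋯`. -/
def Factors {N M : ℕ} (ω : Fin M → List (Fin N)) (x : ℕ → Fin N) (f : ℕ → Fin M) : Prop :=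
  ∀ n, Begins (fun k => x (pos ω f n + k)) (ω (f n))

/-- Matrix irreducibility: from any symbol there is an admissible path to any other. -/
def IrreducibleMat {N : ℕ} (A : Mat N) : Prop :=
  ∀ i j : Fin N, ∃ w : List (Fin N), Adm A (i :: (w ++ [j]))

/-- Permutation matrix: every row and every column has exactly one nonzero entry. -/
def IsPermMat {N : ℕ} (A : Mat N) : Prop :=
  (∀ i, ∃! j, A i j = true) ∧ (∀ j, ∃! i, A i j = true)

/-- A right Markov code for `(X_A, σ_A)`: a prefix code of nonempty admissible words
with the unique factorization property, shift invariance, and irreducibility. -/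
structure IsRightMarkovCode {N M : ℕ} (A : Mat N) (ω : Fin M → List (Fin N)) : Prop where
  adm : ∀ i, AdmX A (ω i)
  ne : ∀ i, ω i ≠ []
  prefixCode : IsPrefixCode ω
  uniqueFact : ∀ γ, AdmX A γ → ∃ η, AdmX A (γ ++ η) ∧
      ∃! l : List (Fin M), γ ++ η = (l.map ω).flatten
  shiftInv : ∃ L : ℕ, 0 < L ∧ ∀ l : List (Fin M), l.length = L → AdmX A ((l.map ω).flatten) →
      ∃ l' : List (Fin M), ((l.map ω).flatten).tail = (l'.map ω).flatten
  irr : ∀ i j, ∃ l : List (Fin M), AdmX A (ω i ++ (l.map ω).flatten ++ ω j)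

/-- The induced matrix `A(C)`: `A(C)(i,j) = 1` iff `ω i ω j` is admissible. -/
def matC {N M : ℕ} (A : Mat N) (ω : Fin M → List (Fin N)) : Mat M :=
  fun i j => decide (Adm A (ω i ++ ω j))

/-- Continuous orbit equivalence of one-sided topological Markov shifts. -/
def COE {N N' : ℕ} (A : Mat N) (B : Mat N') : Prop :=
  ∃ h : ↥(SSpace A) ≃ₜ ↥(SSpace B),
    (∃ k₁ l₁ : ↥(SSpace A) → ℕ, Continuous k₁ ∧ Continuous l₁ ∧
      ∀ x, (shiftS B)^[k₁ x] (h (shiftS A x)) = (shiftS B)^[l₁ x] (h x)) ∧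
    (∃ k₂ l₂ : ↥(SSpace B) → ℕ, Continuous k₂ ∧ Continuous l₂ ∧
      ∀ y, (shiftS A)^[k₂ y] (h.symm (shiftS B y)) = (shiftS A)^[l₂ y] (h.symm y))

/-!
Two constant words over the same letter are comparable for the prefix order, so a prefix
code contains at most one word `a^m`, and any factorization of a constant word into code
words uses only that one. Shift invariance applied to `(a^m)^L` factors `a^(Lm - 1)`, so
`m ∣ Lm - 1`, whence `m = 1`. Conversely, in a factorization of an extension of `a^(K+1)`,
where `K` bounds the code word lengths, the first code word is a prefix of `a^(K+1)`,
hence constant, hence equal to `a`.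
-/

open List

variable {N M : ℕ}

lemma admX_replicate {A : Mat N} {a : Fin N} (ha : A a a = true) (n : ℕ) :
    AdmX A (replicate n a) :=
  ⟨fun _ => a, fun _ => ha, fun _ _ => by simp⟩

namespace IsPrefixCode

variable {ω : Fin M → List (Fin N)}

lemma eq_of_eq_replicate (hω : IsPrefixCode ω) {a : Fin N} {i j : Fin M} {p q : ℕ}
    (hi : ω i = replicate p a) (hj : ω j = replicate q a) : i = j := by
  by_contra hij
  rcases le_total p q with hpq | hqp
  · exact hω.2 i j hij (by rw [hi, hj, prefix_replicate_iff]; simpa using hpq)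
  · exact hω.2 j i (Ne.symm hij) (by rw [hi, hj, prefix_replicate_iff]; simpa using hqp)

lemma dvd_of_flatten_eq_replicate (hω : IsPrefixCode ω) {a : Fin N} {i : Fin M} {m n : ℕ}
    (hi : ω i = replicate m a) {l : List (Fin M)} (hl : (l.map ω).flatten = replicate n a) :
    m ∣ n := by
  have hconst : ∀ j ∈ l, j = i := fun j hj => by
    have hsub : ω j <+ replicate n a := hl ▸ sublist_flatten_of_mem (mem_map_of_mem hj)
    obtain ⟨k, -, hk⟩ := sublist_replicate_iff.1 hsub
    exact hω.eq_of_eq_replicate hk hi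
  rw [eq_replicate_of_mem hconst, map_replicate, hi, flatten_replicate_replicate] at hl
  exact ⟨l.length, by simpa [mul_comm] using (congrArg length hl).symm⟩

end IsPrefixCode

namespace IsRightMarkovCode

variable {A : Mat N} {ω : Fin M → List (Fin N)} {a : Fin N}

lemma eq_one_of_eq_replicate (hC : IsRightMarkovCode A ω) (ha : A a a = true) {i : Fin M}
    {m : ℕ} (hi : ω i = replicate m a) : m = 1 := by
  obtain ⟨L, hL, hshift⟩ := hC.shiftInv
  have hm : m ≠ 0 := by rintro rfl; exact hC.ne i hi
  have hflat : ((replicate L i).map ω).flatten = replicate (L * m) a := by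
    rw [map_replicate, hi, flatten_replicate_replicate]
  obtain ⟨l', hl'⟩ := hshift (replicate L i) length_replicate (hflat ▸ admX_replicate ha _)
  rw [hflat, tail_replicate] at hl'
  have hdvd : m ∣ L * m - 1 := hC.prefixCode.dvd_of_flatten_eq_replicate hi hl'.symm
  have hpos : 1 ≤ L * m := Nat.one_le_iff_ne_zero.2 (by positivity)
  have hone : m ∣ 1 := by
    simpa [Nat.sub_sub_self hpos] using Nat.dvd_sub (dvd_mul_left m L) hdvd
  exact Nat.dvd_one.1 hone

lemma exists_eq_singleton (hC : IsRightMarkovCode A ω) (ha : A a a = true) :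
    ∃ i, ω i = [a] := by
  set K := Finset.univ.sup fun i => (ω i).length
  obtain ⟨η, -, l, hl, -⟩ := hC.uniqueFact _ (admX_replicate ha (K + 1))
  cases l with
  | nil => simp at hl
  | cons j t =>
    have hlen : (ω j).length ≤ K + 1 :=
      Nat.le_succ_of_le (Finset.le_sup (f := fun i => (ω i).length) (Finset.mem_univ j))
    have hpre : ω j <+: replicate (K + 1) a :=
      prefix_of_prefix_length_le ⟨(t.map ω).flatten, by rw [hl]; simp⟩ (prefix_append _ η)
        (by simpa using hlen)
    have hconst := (prefix_replicate_iff.1 hpre).2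
    exact ⟨j, by rw [hconst, hC.eq_one_of_eq_replicate ha hconst]; rfl⟩

end IsRightMarkovCode

theorem fixed_point_code_word_general {N M : ℕ} (A : Mat N)
    (ω : Fin M → List (Fin N)) (hC : IsRightMarkovCode A ω)
    (a : Fin N) (ha : A a a = true) :
    ∀ m : ℕ, (∃ i, ω i = List.replicate m a) ↔ m = 1 := by
  intro m
  constructor
  · rintro ⟨i, hi⟩
    exact hC.eq_one_of_eq_replicate ha hi
  · rintro rfl
    exact hC.exists_eq_singleton ha

/-- If `X_A` has a fixed point `a^∞`, then the constant word `a^m`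
belongs to a right Markov code iff `m = 1`. -/
theorem fixed_point_code_word {N M : ℕ} (A : Mat N)
    (hA : IrreducibleMat A) (hnp : ¬ IsPermMat A)
    (ω : Fin M → List (Fin N)) (hC : IsRightMarkovCode A ω)
    (a : Fin N) (ha : A a a = true) :
    ∀ m : ℕ, (∃ i, ω i = List.replicate m a) ↔ m = 1 :=
  fixed_point_code_word_general A ω hC a ha

end TMS
end

section
/- Let C = {ω(1),...,ω(M)} be a right Markov code for (X_A, σ_A), and let A(C) be the M×M matrix with A(C)(i,j) = 1 iff ω(i)ω(j) is admissible. Then the standard coding map h_C : X_A → X_{A(C)}, sending x = ω(i_1)ω(i_2)⋯ (its unique factorization) to (i_1, i_2, ...), is a well-defined homeomorphism. -/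
namespace TMS

/-!
Decoding `f ↦ ω (f 0) ω (f 1) ⋯` maps `X_{A(C)}` continuously into `X_A`: the words are nonempty,
so admissibility of the concatenation is decided by consecutive pairs of code words, which is
exactly the condition defining `A(C)`. Decoding is injective by the prefix property. It is
surjective because every point of `X_A` begins with a code word (the factorization of a prefix
longer than all code words must start with one) and `X_A` is shift invariant, so peeling off
first code words factors every point. A continuous bijection from the compact space `X_{A(C)}`
onto the Hausdorff space `X_A` is a homeomorphism, and its inverse is the standard coding map.
-/

section

variable {N M : ℕ}

def shiftBy (a : ℕ) (x : ℕ → Fin N) : ℕ → Fin N := fun k => x (a + k)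

@[simp] lemma shiftBy_apply (a : ℕ) (x : ℕ → Fin N) (k : ℕ) : shiftBy a x k = x (a + k) :=
  rfl

lemma shiftBy_mem {A : Mat N} {x : ℕ → Fin N} (hx : x ∈ SSpace A) (a : ℕ) :
    shiftBy a x ∈ SSpace A :=
  fun n => hx (a + n)

section Begins

variable {x : ℕ → Fin N} {u v : List (Fin N)}

lemma begins_ofFn (x : ℕ → Fin N) (n : ℕ) : Begins x (List.ofFn fun i : Fin n => x i) := by
  intro i hi
  simp

lemma begins_append_iff : Begins x (u ++ v) ↔ Begins x u ∧ Begins (shiftBy u.length x) v := by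
  constructor
  · intro h
    refine ⟨fun i hi => ?_, fun i hi => ?_⟩
    · simpa [List.getElem_append_left hi] using h i (by simp; omega)
    · simpa using h (u.length + i) (by simp; omega)
  · rintro ⟨hu, hv⟩ i hi
    rcases lt_or_ge i u.length with h | h
    · simpa [List.getElem_append_left h] using hu i h
    · have := hv (i - u.length) (by simp at hi; omega)
      simp only [shiftBy_apply, Nat.add_sub_cancel' h] at this
      simpa [List.getElem_append_right h] using this

lemma Begins.of_prefix (hv : Begins x v) (h : u <+: v) : Begins x u := by
  obtain ⟨t, rfl⟩ := h
  exact (begins_append_iff.1 hv).1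

lemma Begins.prefix_of_length_le (hu : Begins x u) (hv : Begins x v)
    (h : u.length ≤ v.length) : u <+: v :=
  List.prefix_iff_getElem.2 ⟨h, fun i hi => by
    simpa using (hu i hi).symm.trans (hv i (by omega))⟩

lemma Begins.adm {A : Mat N} (hx : x ∈ SSpace A) (h : Begins x u) : Adm A u :=
  List.isChain_iff_getElem.2 fun i hi => by
    have hi₀ := h i (by omega)
    have hi₁ := h (i + 1) hi
    simp only [List.get_eq_getElem] at hi₀ hi₁
    rw [← hi₀, ← hi₁]
    exact hx i

lemma Begins.apply_of_adm {A : Mat N} (h : Begins x u) (hu : Adm A u) {k : ℕ}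
    (hk : k + 1 < u.length) : A (x k) (x (k + 1)) = true := by
  simpa [h k (by omega), h (k + 1) hk] using List.isChain_iff_getElem.1 hu k hk

end Begins

section Factorization

variable {ω : Fin M → List (Fin N)}

def blocks (ω : Fin M → List (Fin N)) (f : ℕ → Fin M) (n : ℕ) : List (Fin N) :=
  (List.ofFn fun i : Fin n => ω (f i)).flatten

lemma blocks_succ (f : ℕ → Fin M) (n : ℕ) :
    blocks ω f (n + 1) = blocks ω f n ++ ω (f n) := by
  rw [blocks, blocks, List.ofFn_succ']
  simp

@[simp] lemma length_blocks (f : ℕ → Fin M) (n : ℕ) :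
    (blocks ω f n).length = pos ω f n := by
  induction n with
  | zero => rfl
  | succ n ih => rw [blocks_succ, List.length_append, ih, pos]

lemma blocks_prefix_blocks (f : ℕ → Fin M) {m n : ℕ} (h : m ≤ n) :
    blocks ω f m <+: blocks ω f n := by
  induction n, h using Nat.le_induction with
  | base => exact List.prefix_refl _
  | succ n _ ih => exact ih.trans (blocks_succ f n ▸ List.prefix_append _ _)

lemma le_length_flatten_ofFn (hne : ∀ i, ω i ≠ []) {n : ℕ} (v : Fin n → Fin M) :
    n ≤ (List.ofFn fun i => ω (v i)).flatten.length := by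
  simp only [List.length_flatten, List.map_ofFn, List.sum_ofFn]
  calc n = ∑ _ : Fin n, 1 := by simp
    _ ≤ _ := Finset.sum_le_sum fun i _ => List.length_pos_iff.2 (hne (v i))

lemma le_pos (hne : ∀ i, ω i ≠ []) (f : ℕ → Fin M) (n : ℕ) : n ≤ pos ω f n :=
  length_blocks (ω := ω) f n ▸ le_length_flatten_ofFn hne _

lemma factors_iff_begins_blocks {x : ℕ → Fin N} {f : ℕ → Fin M} :
    Factors ω x f ↔ ∀ n, Begins x (blocks ω f n) := by
  have step : ∀ n, Begins x (blocks ω f (n + 1)) ↔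
      Begins x (blocks ω f n) ∧ Begins (shiftBy (pos ω f n) x) (ω (f n)) := fun n => by
    rw [blocks_succ, begins_append_iff, length_blocks]
  refine ⟨fun h n => ?_, fun h n => ((step n).1 (h (n + 1))).2⟩
  induction n with
  | zero => exact fun i hi => absurd hi (by simp [blocks])
  | succ n ih => exact (step n).2 ⟨ih, h n⟩

lemma Factors.begins_blocks {x : ℕ → Fin N} {f : ℕ → Fin M} (h : Factors ω x f) (n : ℕ) :
    Begins x (blocks ω f n) :=
  factors_iff_begins_blocks.1 h n

lemma Factors.eq_getElem_blocks (hne : ∀ i, ω i ≠ []) {x : ℕ → Fin N} {f : ℕ → Fin M}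
    (h : Factors ω x f) (k : ℕ) :
    x k = (blocks ω f (k + 1))[k]'(by simpa using le_pos hne f (k + 1)) := by
  simpa using h.begins_blocks (k + 1) k (by simpa using le_pos hne f (k + 1))

lemma Factors.ext (hne : ∀ i, ω i ≠ []) {x y : ℕ → Fin N} {f : ℕ → Fin M}
    (hx : Factors ω x f) (hy : Factors ω y f) : x = y :=
  funext fun k => (hx.eq_getElem_blocks hne k).trans (hy.eq_getElem_blocks hne k).symm

lemma IsPrefixCode.eq_of_begins (hω : IsPrefixCode ω) {x : ℕ → Fin N} {i j : Fin M}
    (hi : Begins x (ω i)) (hj : Begins x (ω j)) : i = j := by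
  by_contra hij
  rcases le_total (ω i).length (ω j).length with h | h
  · exact hω.2 i j hij (hi.prefix_of_length_le hj h)
  · exact hω.2 j i (Ne.symm hij) (hj.prefix_of_length_le hi h)

lemma Factors.unique (hω : IsPrefixCode ω) {x : ℕ → Fin N} {f g : ℕ → Fin M}
    (hf : Factors ω x f) (hg : Factors ω x g) : f = g := by
  have key : ∀ n, pos ω f n = pos ω g n ∧ f n = g n := by
    intro n
    induction n with
    | zero => exact ⟨rfl, hω.eq_of_begins (hf 0) (hg 0)⟩
    | succ n ih =>
      have hpos : pos ω f (n + 1) = pos ω g (n + 1) := by simp only [pos, ih.1, ih.2]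
      exact ⟨hpos, hω.eq_of_begins (hf (n + 1)) (hpos ▸ hg (n + 1))⟩
  exact funext fun n => (key n).2

end Factorization

lemma Factors.mem_sSpace_iff {A : Mat N} {ω : Fin M → List (Fin N)} (hne : ∀ i, ω i ≠ [])
    {x : ℕ → Fin N} {f : ℕ → Fin M} (h : Factors ω x f) :
    x ∈ SSpace A ↔ f ∈ SSpace (matC A ω) := by
  constructor
  · intro hx n
    have hadm : Adm A (blocks ω f n ++ (ω (f n) ++ ω (f (n + 1)))) := by
      rw [← List.append_assoc, ← blocks_succ, ← blocks_succ]
      exact (h.begins_blocks (n + 2)).adm hx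
    exact decide_eq_true (List.IsChain.right_of_append hadm)
  · intro hf
    have hadm : ∀ n, Adm A (blocks ω f (n + 1)) := by
      intro n
      induction n with
      | zero =>
        rw [show blocks ω f 1 = ω (f 0) by simp [blocks]]
        exact List.IsChain.left_of_append (of_decide_eq_true (hf 0))
      | succ n ih =>
        rw [blocks_succ] at ih
        rw [blocks_succ, blocks_succ]
        exact List.IsChain.append_overlap ih (of_decide_eq_true (hf n)) (hne _)
    intro k
    refine (h.begins_blocks (k + 2)).apply_of_adm (hadm (k + 1)) ?_
    have := le_pos hne f (k + 2)
    simp only [length_blocks]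
    omega

section Decoding

variable (ω : Fin M → List (Fin N)) (hne : ∀ i, ω i ≠ [])

/-- Since code words are nonempty, the `k`-th letter of `ω (f 0) ω (f 1) ⋯` already lies in the
first `k + 1` words; reading it off this finite window is what makes decoding continuous. -/
def decodeWindow {k : ℕ} (v : Fin (k + 1) → Fin M) : Fin N :=
  (List.ofFn fun i => ω (v i)).flatten[k]'(le_length_flatten_ofFn hne v)

def decode (f : ℕ → Fin M) (k : ℕ) : Fin N :=
  decodeWindow ω hne fun i : Fin (k + 1) => f i

lemma factors_decode (f : ℕ → Fin M) : Factors ω (decode ω hne f) f := by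
  refine factors_iff_begins_blocks.2 fun n i hi => ?_
  have hi' : i < (blocks ω f (i + 1)).length := by simpa using le_pos hne f (i + 1)
  show (blocks ω f (i + 1))[i] = (blocks ω f n).get ⟨i, hi⟩
  rw [List.get_eq_getElem]
  rcases le_total (i + 1) n with h | h
  · exact (blocks_prefix_blocks f h).getElem hi'
  · exact ((blocks_prefix_blocks f h).getElem hi).symm

lemma continuous_decode : Continuous (decode ω hne) :=
  continuous_pi fun k => continuous_of_discreteTopology.comp
    (continuous_pi fun i : Fin (k + 1) => continuous_apply (i : ℕ))

end Decoding

lemma exists_factors_of_forall_begins {ω : Fin M → List (Fin N)} {S : Set (ℕ → Fin N)}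
    (hS : ∀ x ∈ S, ∀ a, shiftBy a x ∈ S) (hbegins : ∀ x ∈ S, ∃ i, Begins x (ω i))
    {x : ℕ → Fin N} (hx : x ∈ S) : ∃ f, Factors ω x f := by
  choose first hfirst using hbegins
  let step : S → S := fun y => ⟨shiftBy (ω (first y y.2)).length y, hS _ y.2 _⟩
  let f : ℕ → Fin M := fun n => first _ (step^[n] ⟨x, hx⟩).2
  have htail : ∀ n, (step^[n] ⟨x, hx⟩).1 = shiftBy (pos ω f n) x := by
    intro n
    induction n with
    | zero => funext k; simp [pos]
    | succ n ih =>
      calc (step^[n + 1] ⟨x, hx⟩).1 = shiftBy (ω (f n)).length (step^[n] ⟨x, hx⟩).1 := by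
            rw [Function.iterate_succ_apply']
        _ = shiftBy (pos ω f (n + 1)) x := by
            rw [ih]; funext k; simp [pos, Nat.add_assoc]
  refine ⟨f, fun n => ?_⟩
  show Begins (shiftBy (pos ω f n) x) (ω (f n))
  rw [← htail n]
  exact hfirst _ _

lemma IsRightMarkovCode.exists_begins {A : Mat N} {ω : Fin M → List (Fin N)}
    (hC : IsRightMarkovCode A ω) {x : ℕ → Fin N} (hx : x ∈ SSpace A) :
    ∃ i, Begins x (ω i) := by
  obtain ⟨m, hm⟩ := Finite.exists_le fun i => (ω i).length
  obtain ⟨η, -, l, hl, -⟩ := hC.uniqueFact _ ⟨x, hx, begins_ofFn x (m + 1)⟩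
  cases l with
  | nil => simp at hl
  | cons i t =>
    refine ⟨i, (begins_ofFn x (m + 1)).of_prefix ?_⟩
    refine List.prefix_of_prefix_length_le ?_ (List.prefix_append _ η) ?_
    · rw [hl]
      exact List.prefix_append _ _
    · simpa using (hm i).trans (Nat.le_succ m)

lemma IsRightMarkovCode.exists_factors {A : Mat N} {ω : Fin M → List (Fin N)}
    (hC : IsRightMarkovCode A ω) {x : ℕ → Fin N} (hx : x ∈ SSpace A) :
    ∃ f, Factors ω x f :=
  exists_factors_of_forall_begins (fun _ hy a => shiftBy_mem hy a)
    (fun _ hy => hC.exists_begins hy) hx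

lemma isClosed_sSpace (B : Mat M) : IsClosed (SSpace B) := by
  have h : SSpace B =
      ⋂ n, (fun x : ℕ → Fin M => (x n, x (n + 1))) ⁻¹' {p | B p.1 p.2 = true} := by
    ext x
    simp [SSpace]
  rw [h]
  exact isClosed_iInter fun n =>
    (isClosed_discrete _).preimage ((continuous_apply n).prodMk (continuous_apply (n + 1)))

instance (B : Mat M) : CompactSpace (SSpace B) :=
  isCompact_iff_compactSpace.1 (isClosed_sSpace B).isCompact

section DecodeSSpace

variable {A : Mat N} {ω : Fin M → List (Fin N)}

def decodeSSpace (hne : ∀ i, ω i ≠ []) (f : SSpace (matC A ω)) : SSpace A :=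
  ⟨decode ω hne f, ((factors_decode ω hne f).mem_sSpace_iff hne).2 f.2⟩

lemma decodeSSpace_of_factors (hne : ∀ i, ω i ≠ []) {x : SSpace A} {f : ℕ → Fin M}
    (hf : Factors ω x.1 f) : decodeSSpace hne ⟨f, (hf.mem_sSpace_iff hne).1 x.2⟩ = x :=
  Subtype.ext ((factors_decode ω hne f).ext hne hf)

lemma continuous_decodeSSpace (hne : ∀ i, ω i ≠ []) :
    Continuous (decodeSSpace (A := A) hne) :=
  ((continuous_decode ω hne).comp continuous_subtype_val).subtype_mk _

lemma IsRightMarkovCode.decodeSSpace_bijective (hC : IsRightMarkovCode A ω) :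
    Function.Bijective (decodeSSpace (A := A) hC.ne) := by
  refine ⟨fun f g hfg => Subtype.ext ?_, fun x => ?_⟩
  · have hg : Factors ω (decodeSSpace hC.ne f).1 g := hfg ▸ factors_decode ω hC.ne g.1
    exact (factors_decode ω hC.ne f.1).unique hC.prefixCode hg
  · obtain ⟨f, hf⟩ := hC.exists_factors x.2
    exact ⟨_, decodeSSpace_of_factors hC.ne hf⟩

end DecodeSSpace

end

theorem standard_coding_homeomorphism_general {N M : ℕ} (A : Mat N)
    (ω : Fin M → List (Fin N)) (hC : IsRightMarkovCode A ω) :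
    ∃ h : ↥(SSpace A) ≃ₜ ↥(SSpace (matC A ω)),
      ∀ (x : ↥(SSpace A)) (f : ℕ → Fin M), Factors ω x.1 f → (h x).1 = f := by
  let H := (show Continuous (Equiv.ofBijective _ hC.decodeSSpace_bijective) from
    continuous_decodeSSpace hC.ne).homeoOfEquivCompactToT2
  refine ⟨H.symm, fun x f hf => ?_⟩
  rw [← decodeSSpace_of_factors hC.ne hf]
  exact congrArg Subtype.val (H.symm_apply_apply _)

/-- The standard coding map `h_C : X_A → X_{A(C)}`, sending a point to
the index sequence of its unique factorization, is a well-defined homeomorphism. -/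
theorem standard_coding_homeomorphism {N M : ℕ} (A : Mat N)
    (hA : IrreducibleMat A) (hnp : ¬ IsPermMat A)
    (ω : Fin M → List (Fin N)) (hC : IsRightMarkovCode A ω) :
    ∃ h : ↥(SSpace A) ≃ₜ ↥(SSpace (matC A ω)),
      ∀ (x : ↥(SSpace A)) (f : ℕ → Fin M), Factors ω x.1 f → (h x).1 = f :=
  standard_coding_homeomorphism_general A ω hC

end TMS
end

section
/- Let C be a prefix code for X_A with the unique factorization property and let K_0 = max length of words in C. Then for every x ∈ X_A and every n, the first n code words in the factorizations of sufficiently long finite prefixes of x (extended to admissible factorizable words) stabilize, i.e., if x_{[1,m]}η factors as ω(i_1)⋯ω(i_k) and x_{[1,m']}η' factors as ω(j_1)⋯ω(j_{k'}) with m, m' ≥ nK_0, then i_p = j_p for p = 1,...,n. -/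
namespace List

variable {α ι : Type*}

theorem ofFn_prefix_ofFn_of_le (x : ℕ → α) {k m : ℕ} (h : k ≤ m) :
    ofFn (fun i : Fin k => x i) <+: ofFn (fun i : Fin m => x i) := by
  rw [prefix_iff_eq_take]
  apply ext_getElem
  · simp [h]
  · intro j _ _
    simp

theorem drop_prefix_of_prefix_append {a s t : List α} (ha : a <+: s) (hs : s <+: a ++ t) :
    s.drop a.length <+: t := by
  rw [← prefix_append_right_inj a, prefix_iff_eq_append.1 ha]
  exact hs

variable {ω : ι → List α}

theorem eq_of_prefix_of_prefix (hpc : ∀ i j, i ≠ j → ¬ ω i <+: ω j) {i j : ι} {s : List α}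
    (hi : ω i <+: s) (hj : ω j <+: s) : i = j := by
  by_contra hij
  rcases prefix_or_prefix_of_prefix hi hj with h | h
  exacts [hpc i j hij h, hpc j i (Ne.symm hij) h]

theorem head_prefix_of_prefix_flatten {K : ℕ} (hK : ∀ i, (ω i).length ≤ K) {i : ι} {l : List ι}
    {s : List α} (hs : s <+: ((i :: l).map ω).flatten) (hlen : K ≤ s.length) : ω i <+: s :=
  prefix_of_prefix_length_le (prefix_append _ _) hs ((hK i).trans hlen)

theorem take_eq_of_prefix_flatten (hne : ∀ i, ω i ≠ []) (hpc : ∀ i j, i ≠ j → ¬ ω i <+: ω j)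
    {K : ℕ} (hK : ∀ i, (ω i).length ≤ K) (n : ℕ) {l l' : List ι} {s : List α}
    (hs : s <+: (l.map ω).flatten) (hs' : s <+: (l'.map ω).flatten) (hlen : n * K ≤ s.length) :
    l.take n = l'.take n := by
  induction n generalizing l l' s with
  | zero => simp
  | succ n ih =>
    have hK_le : K ≤ s.length := le_trans (Nat.le_mul_of_pos_left K n.succ_pos) hlen
    match l, l' with
    | [], [] => rfl
    | [], j :: _ =>
      obtain rfl : s = [] := prefix_nil.1 hs
      exact (hne j (prefix_nil.1 (head_prefix_of_prefix_flatten hK hs' hK_le))).elim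
    | i :: _, [] =>
      obtain rfl : s = [] := prefix_nil.1 hs'
      exact (hne i (prefix_nil.1 (head_prefix_of_prefix_flatten hK hs hK_le))).elim
    | i :: ls, j :: ls' =>
      have hi := head_prefix_of_prefix_flatten hK hs hK_le
      obtain rfl : i = j :=
        eq_of_prefix_of_prefix hpc hi (head_prefix_of_prefix_flatten hK hs' hK_le)
      rw [take_succ_cons, take_succ_cons, ih (drop_prefix_of_prefix_append hi hs)
        (drop_prefix_of_prefix_append hi hs')]
      rw [length_drop]
      have := hK i
      rw [Nat.succ_mul] at hlen
      omega

end List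

namespace TMS

theorem prefix_factorizations_stabilize_general {N M K₀ : ℕ}
    (ω : Fin M → List (Fin N)) (hne : ∀ i, ω i ≠ []) (hpc : IsPrefixCode ω)
    (hK : K₀ = Finset.univ.sup fun i => (ω i).length)
    (x : ℕ → Fin N)
    (n m m' : ℕ) (hm : n * K₀ ≤ m) (hm' : n * K₀ ≤ m')
    (η η' : List (Fin N)) (l l' : List (Fin M))
    (hfac : (List.ofFn fun i : Fin m => x i.1) ++ η = (l.map ω).flatten)
    (hfac' : (List.ofFn fun i : Fin m' => x i.1) ++ η' = (l'.map ω).flatten) :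
    ∀ p < n, l[p]? = l'[p]? := by
  have hKb : ∀ i, (ω i).length ≤ K₀ := fun i =>
    hK ▸ Finset.le_sup (f := fun i => (ω i).length) (Finset.mem_univ i)
  have hs : (List.ofFn fun i : Fin (n * K₀) => x i.1) <+: (l.map ω).flatten :=
    hfac ▸ (List.ofFn_prefix_ofFn_of_le x hm).trans (List.prefix_append _ _)
  have hs' : (List.ofFn fun i : Fin (n * K₀) => x i.1) <+: (l'.map ω).flatten :=
    hfac' ▸ (List.ofFn_prefix_ofFn_of_le x hm').trans (List.prefix_append _ _)
  have htake : l.take n = l'.take n :=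
    List.take_eq_of_prefix_flatten hne hpc.2 hKb n hs hs' (List.length_ofFn ..).ge
  intro p hp
  simpa [List.getElem?_take, hp] using congrArg (·[p]?) htake

/-- For a prefix code with the unique factorization property and
`K₀` the maximal word length, the first `n` code words in factorizations of
extended prefixes of length at least `n·K₀` of a point stabilize. -/
theorem prefix_factorizations_stabilize {N M K₀ : ℕ} (A : Mat N)
    (ω : Fin M → List (Fin N)) (hne : ∀ i, ω i ≠ []) (hpc : IsPrefixCode ω)
    (hufp : ∀ γ, AdmX A γ → ∃ η, AdmX A (γ ++ η) ∧
        ∃! l : List (Fin M), γ ++ η = (l.map ω).flatten)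
    (hK : K₀ = Finset.univ.sup fun i => (ω i).length)
    (x : ℕ → Fin N) (hx : x ∈ SSpace A)
    (n m m' : ℕ) (hm : n * K₀ ≤ m) (hm' : n * K₀ ≤ m')
    (η η' : List (Fin N)) (l l' : List (Fin M))
    (hfac : (List.ofFn fun i : Fin m => x i.1) ++ η = (l.map ω).flatten)
    (hfac' : (List.ofFn fun i : Fin m' => x i.1) ++ η' = (l'.map ω).flatten) :
    ∀ p < n, l[p]? = l'[p]? :=
  prefix_factorizations_stabilize_general ω hne hpc hK x n m m' hm hm' η η' l l' hfac hfac'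

end TMS
end
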